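/- arXiv:2309.11296 — 2 statements merged into one kernel-verified Lean document; each statement's English description precedes it below -/
import Mathlib

section
/- If K : ℝⁿ → [0,+∞] is measurable with K(-x) = K(x) a.e. and ∫_{ℝⁿ} min{1,|x|} K(x) dx < +∞, then for every measurable set E ⊂ ℝⁿ with finite Lebesgue measure and finite Euclidean perimeter, the non-local K-perimeter P_K(E) = (1/2)∫∫ |χ_E(x) − χ_E(y)| K(x−y) dx dy satisfies P_K(E) ≤ max{ (1/2) P(E), |E| } · ∫_{ℝⁿ} min{1,|x|} K(x) dx; in particular P_K(E) < +∞. -/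
/-!
After the substitution `y = x - z`, `2 P_K(E) = ∫ K(z) |E ∆ (E + z)| dz`. The set `E ∆ (E + z)`
has measure at most `2 |E|`, and it lies in the sweep `∂E + [0, z]`: the segment from `x` to
`x - z` meets `∂E` whenever its endpoints lie on different sides of `E`. Cover `∂E` by sets `U`
of small diameter and put each swept piece `U + [0, z]` in a box with one edge along `z`; its volume
is at most `(diam U + |z|) diam U ^ (n - 1)`, so `|∂E + [0, z]| ≤ |z| H^{n-1}(∂E)` (Mathlib's `μH`
has no normalising constant, which is exactly what the box estimate produces). Hence
`|E ∆ (E + z)| ≤ 2 max (H^{n-1}(∂E) / 2, |E|) min (1, |z|)`, and integrating against `K` concludes.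
-/

open MeasureTheory Metric Set
open scoped ENNReal RealInnerProductSpace

noncomputable def LK {n : ℕ} (K : EuclideanSpace ℝ (Fin n) → ℝ≥0∞)
    (E F : Set (EuclideanSpace ℝ (Fin n))) : ℝ≥0∞ :=
  ∫⁻ x in E, ∫⁻ y in F, K (x - y)

open Classical in
/-- The non-local `K`-perimeter `P_K(E) = (1/2) ∬ |χ_E(x) - χ_E(y)| K(x-y) dx dy`. -/
noncomputable def PK {n : ℕ} (K : EuclideanSpace ℝ (Fin n) → ℝ≥0∞)
    (E : Set (EuclideanSpace ℝ (Fin n))) : ℝ≥0∞ :=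
  (1 / 2) * ∫⁻ x, ∫⁻ y, (if (x ∈ E) = (y ∈ E) then 0 else K (x - y))

open Filter Topology
open scoped Pointwise symmDiff

theorem IsPreconnected.inter_frontier_nonempty {X : Type*} [TopologicalSpace X] {s E : Set X}
    (hs : IsPreconnected s) (hsE : (s ∩ E).Nonempty) (hsE' : (s \ E).Nonempty) :
    (s ∩ frontier E).Nonempty := by
  by_contra! h
  have hcover : s ⊆ interior E ∪ interior Eᶜ := fun x hx => by
    rw [← compl_frontier_eq_union_interior]
    exact fun hxE => h.subset ⟨hx, hxE⟩
  have hint : (s ∩ interior E).Nonempty := by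
    obtain ⟨x, hxs, hxE⟩ := hsE
    exact ⟨x, hxs, (hcover hxs).resolve_right fun hx => interior_subset hx hxE⟩
  have hext : (s ∩ interior Eᶜ).Nonempty := by
    obtain ⟨x, hxs, hxE⟩ := hsE'
    exact ⟨x, hxs, (hcover hxs).resolve_left fun hx => hxE (interior_subset hx)⟩
  obtain ⟨x, -, hx, hx'⟩ := hs _ _ isOpen_interior isOpen_interior hcover hint hext
  exact interior_subset hx' (interior_subset hx)

theorem ediam_segment {E : Type*} [SeminormedAddCommGroup E] [NormedSpace ℝ E] (x y : E) :
    ediam (segment ℝ x y) = edist x y := by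
  rw [← convexHull_pair, convexHull_ediam, ediam_pair]

theorem symmDiff_preimage_sub_subset_frontier_add_segment {V : Type*} [AddCommGroup V]
    [Module ℝ V] [TopologicalSpace V] [IsTopologicalAddGroup V] [ContinuousSMul ℝ V]
    (E : Set V) (z : V) :
    E ∆ ((· - z) ⁻¹' E) ⊆ frontier E + segment ℝ 0 z := by
  intro x hx
  have hseg : IsPreconnected (segment ℝ x (x - z)) := (convex_segment _ _).isPreconnected
  obtain ⟨y, hy, hyE⟩ : (segment ℝ x (x - z) ∩ frontier E).Nonempty := by
    rcases hx with ⟨hxE, hxzE⟩ | ⟨hxzE, hxE⟩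
    · exact hseg.inter_frontier_nonempty ⟨x, left_mem_segment _ _ _, hxE⟩
        ⟨x - z, right_mem_segment _ _ _, hxzE⟩
    · exact hseg.inter_frontier_nonempty ⟨x - z, right_mem_segment _ _ _, hxzE⟩
        ⟨x, left_mem_segment _ _ _, hxE⟩
  rw [segment_eq_image'] at hy
  obtain ⟨θ, hθ, rfl⟩ := hy
  refine ⟨_, hyE, θ • z, ?_, by module⟩
  rw [segment_eq_image']
  exact ⟨θ, hθ, by simp⟩

theorem measure_symmDiff_preimage_sub_le {G : Type*} [MeasurableSpace G] [AddGroup G]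
    [MeasurableAdd G] (μ : Measure G) [μ.IsAddRightInvariant] (E : Set G) (z : G) :
    μ (E ∆ ((· - z) ⁻¹' E)) ≤ 2 * μ E :=
  calc μ (E ∆ ((· - z) ⁻¹' E)) ≤ μ E + μ ((· - z) ⁻¹' E) :=
        (measure_mono symmDiff_subset_union).trans (measure_union_le _ _)
    _ = 2 * μ E := by simp_rw [sub_eq_add_neg, measure_preimage_add_right, two_mul]

theorem exists_cover_tsum_lt_of_hausdorffMeasure_lt {X : Type*} [EMetricSpace X]
    [MeasurableSpace X] [BorelSpace X] {d : ℝ} {S : Set X} {c : ℝ≥0∞} (hS : μH[d] S < c)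
    {δ : ℝ≥0∞} (hδ : 0 < δ) :
    ∃ t : ℕ → Set X, S ⊆ ⋃ k, t k ∧ (∀ k, ediam (t k) ≤ δ) ∧
      ∑' k, ⨆ _ : (t k).Nonempty, ediam (t k) ^ d < c := by
  rw [Measure.hausdorffMeasure_apply] at hS
  simpa only [iInf_lt_iff, exists_prop] using
    (le_iSup₂ (f := fun r (_ : 0 < r) => _) δ hδ).trans_lt hS

section InnerProductSpace

variable {F : Type*} [NormedAddCommGroup F] [InnerProductSpace ℝ F]

theorem ediam_image_inner_le {v : F} (hv : ‖v‖ = 1) (A : Set F) :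
    ediam ((fun x => ⟪v, x⟫) '' A) ≤ ediam A := by
  have : LipschitzWith 1 (fun x => ⟪v, x⟫) := LipschitzWith.of_dist_le_mul fun x y => by
    simpa [Real.dist_eq, ← inner_sub_right, hv, dist_eq_norm] using
      abs_real_inner_le_norm v (x - y)
  simpa using this.ediam_image_le A

theorem ediam_image_inner_segment_le (v z : F) :
    ediam ((fun x => ⟪v, x⟫) '' segment ℝ 0 z) ≤ ENNReal.ofReal |⟪v, z⟫| := by
  have := image_segment ℝ (innerₛₗ ℝ v).toAffineMap 0 z
  simp only [LinearMap.coe_toAffineMap, map_zero] at this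
  rw [show (fun x => ⟪v, x⟫) = innerₛₗ ℝ v from rfl, this, ediam_segment, edist_comm,
    edist_dist, Real.dist_eq, sub_zero]
  rfl

variable [FiniteDimensional ℝ F] [MeasurableSpace F] [BorelSpace F]

theorem OrthonormalBasis.volume_le_prod_ediam_image_inner {ι : Type*} [Fintype ι]
    (b : OrthonormalBasis ι ℝ F) (A : Set F) :
    volume A ≤ ∏ i, ediam ((fun x => ⟪b i, x⟫) '' A) := by
  have hb : MeasurePreserving (fun x => WithLp.ofLp (b.repr x)) volume volume :=
    (PiLp.volume_preserving_ofLp ι).comp b.measurePreserving_repr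
  calc volume A ≤ volume.map _ (_ '' A) :=
        Measure.le_map_apply_image hb.measurable.aemeasurable A
    _ = volume ((fun x => WithLp.ofLp (b.repr x)) '' A) := by rw [hb.map_eq]
    _ ≤ _ := Real.volume_pi_le_prod_diam _
    _ = _ := by simp only [image_image, Function.eval, b.repr_apply_apply]

theorem volume_add_segment_le (U : Set F) {z : F} (hz : z ≠ 0) :
    volume (U + segment ℝ 0 z) ≤
      (ediam U + ENNReal.ofReal ‖z‖) * ediam U ^ ((Module.finrank ℝ F : ℝ) - 1) := by
  classical
  set e := (‖z‖⁻¹ : ℝ) • z with he_def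
  have he : ‖e‖ = 1 := norm_smul_inv_norm hz
  have hortho : Orthonormal ℝ ((↑) : ({e} : Set F) → F) := by simp [he]
  obtain ⟨u, b, heu, hb⟩ := hortho.exists_orthonormalBasis_extension
  have hcard : Module.finrank ℝ F = u.card := Module.finrank_eq_card_finset_basis b.toBasis
  set i₀ : u := ⟨e, heu rfl⟩
  have hz_eq : z = ‖z‖ • b i₀ := by
    rw [hb]
    change z = ‖z‖ • e
    rw [he_def, smul_smul, mul_inv_cancel₀ (norm_ne_zero_iff.2 hz), one_smul]
  have hinner : ∀ i, ⟪b i, z⟫ = if i = i₀ then ‖z‖ else 0 := by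
    intro i
    conv_lhs => rw [hz_eq, real_inner_smul_right, b.inner_eq_ite]
    split_ifs <;> simp
  have hfactor : ∀ i : u, ediam ((fun x => ⟪b i, x⟫) '' (U + segment ℝ 0 z)) ≤
      ediam U + ENNReal.ofReal |⟪b i, z⟫| := by
    intro i
    rw [show (fun x => ⟪b i, x⟫) = innerₛₗ ℝ (b i) from rfl, image_add]
    exact (ediam_add_le _ _).trans (add_le_add (ediam_image_inner_le (b.orthonormal.1 i) U)
      (ediam_image_inner_segment_le _ _))
  calc volume (U + segment ℝ 0 z)
      ≤ ∏ i, ediam ((fun x => ⟪b i, x⟫) '' (U + segment ℝ 0 z)) :=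
        b.volume_le_prod_ediam_image_inner _
    _ ≤ ∏ i, (ediam U + ENNReal.ofReal |⟪b i, z⟫|) := Finset.prod_le_prod' fun i _ => hfactor i
    _ = (ediam U + ENNReal.ofReal ‖z‖) * ediam U ^ (u.card - 1) := by
        rw [Fintype.prod_eq_mul_prod_compl i₀, Finset.prod_congr rfl fun i hi => by
          rw [hinner, if_neg (Finset.mem_compl.1 hi ∘ Finset.mem_singleton.2)]]
        simp [hinner, Finset.card_compl]
    _ = _ := by
        rw [← ENNReal.rpow_natCast, hcard, Nat.cast_sub (Finset.card_pos.2 ⟨e, heu rfl⟩),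
          Nat.cast_one]

theorem volume_add_segment_le_mul_hausdorffMeasure (S : Set F) {z : F} (hz : z ≠ 0) :
    volume (S + segment ℝ 0 z) ≤ ENNReal.ofReal ‖z‖ * μH[(Module.finrank ℝ F : ℝ) - 1] S := by
  set d : ℝ := (Module.finrank ℝ F : ℝ) - 1
  set a := ENNReal.ofReal ‖z‖
  rcases eq_or_ne (μH[d] S) ⊤ with hS | hS
  · simp [hS, a, ENNReal.mul_top, hz]
  have hcover : ∀ δ > 0, ∀ c > μH[d] S, volume (S + segment ℝ 0 z) ≤ (δ + a) * c := by
    intro δ hδ c hc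
    obtain ⟨t, hSt, htδ, hsum⟩ := exists_cover_tsum_lt_of_hausdorffMeasure_lt hc hδ
    have hpiece : ∀ k, volume (t k + segment ℝ 0 z) ≤
        (δ + a) * ⨆ _ : (t k).Nonempty, ediam (t k) ^ d := by
      intro k
      rcases (t k).eq_empty_or_nonempty with hk | hk
      · simp [hk]
      · rw [iSup_pos hk]
        exact (volume_add_segment_le (t k) hz).trans (by gcongr; exact htδ k)
    calc volume (S + segment ℝ 0 z) ≤ volume (⋃ k, (t k + segment ℝ 0 z)) := by
          rw [← iUnion_add]; exact measure_mono (add_subset_add_right hSt)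
      _ ≤ ∑' k, (δ + a) * ⨆ _ : (t k).Nonempty, ediam (t k) ^ d :=
          (measure_iUnion_le _).trans (ENNReal.tsum_le_tsum hpiece)
      _ ≤ (δ + a) * c := by rw [ENNReal.tsum_mul_left]; gcongr
  have hlim : Tendsto (fun ε => (ε + a) * (μH[d] S + ε)) (𝓝[>] 0) (𝓝 (a * μH[d] S)) := by
    have hleft : Tendsto (fun ε => ε + a) (𝓝 0) (𝓝 a) := by
      simpa using (tendsto_id (x := 𝓝 (0 : ℝ≥0∞))).add (tendsto_const_nhds (x := a))
    have hright : Tendsto (fun ε => μH[d] S + ε) (𝓝 0) (𝓝 (μH[d] S)) := by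
      simpa using (tendsto_const_nhds (x := μH[d] S)).add (tendsto_id (x := 𝓝 (0 : ℝ≥0∞)))
    exact (ENNReal.Tendsto.mul hleft (Or.inr hS) hright (Or.inr ENNReal.ofReal_ne_top)).mono_left
      nhdsWithin_le_nhds
  refine ge_of_tendsto hlim (eventually_nhdsWithin_of_forall fun ε (hε : 0 < ε) => ?_)
  exact hcover ε hε _ (ENNReal.lt_add_right hS hε.ne')

theorem volume_symmDiff_preimage_sub_le (E : Set F) (z : F) :
    volume (E ∆ ((· - z) ⁻¹' E)) ≤
      2 * max (1 / 2 * μH[(Module.finrank ℝ F : ℝ) - 1] (frontier E)) (volume E) *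
        min 1 (ENNReal.ofReal ‖z‖) := by
  rcases eq_or_ne z 0 with rfl | hz
  · simp
  set H := μH[(Module.finrank ℝ F : ℝ) - 1] (frontier E)
  have hH : H = 2 * (1 / 2 * H) := by
    rw [← mul_assoc, one_div, ENNReal.mul_inv_cancel two_ne_zero ENNReal.ofNat_ne_top, one_mul]
  rw [mul_min, mul_one]
  refine le_min ((measure_symmDiff_preimage_sub_le volume E z).trans
    (by gcongr; exact le_max_right _ _)) ?_
  calc volume (E ∆ ((· - z) ⁻¹' E)) ≤ volume (frontier E + segment ℝ 0 z) :=
        measure_mono (symmDiff_preimage_sub_subset_frontier_add_segment E z)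
    _ ≤ ENNReal.ofReal ‖z‖ * H := volume_add_segment_le_mul_hausdorffMeasure _ hz
    _ = 2 * (1 / 2 * H) * ENNReal.ofReal ‖z‖ := by rw [← hH, mul_comm]
    _ ≤ 2 * max (1 / 2 * H) (volume E) * ENNReal.ofReal ‖z‖ := by
        gcongr; exact le_max_left _ _

end InnerProductSpace

theorem PK_eq_half_lintegral_mul_volume_symmDiff {n : ℕ} {K : EuclideanSpace ℝ (Fin n) → ℝ≥0∞}
    (hK : Measurable K) {E : Set (EuclideanSpace ℝ (Fin n))} (hE : MeasurableSet E) :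
    PK K E = 1 / 2 * ∫⁻ z, K z * volume (E ∆ ((· - z) ⁻¹' E)) := by
  classical
  have hind : ∀ x z, (if (x ∈ E) = (x - z ∈ E) then 0 else K z) =
      (E ∆ ((· - z) ⁻¹' E)).indicator (fun _ => K z) x := by
    intro x z
    by_cases hx : x ∈ E <;> by_cases hxz : x - z ∈ E <;> simp [hx, hxz, mem_symmDiff]
  have hmeas : Measurable fun p : EuclideanSpace ℝ (Fin n) × EuclideanSpace ℝ (Fin n) =>
      if (p.1 ∈ E) = (p.1 - p.2 ∈ E) then 0 else K p.2 := by
    refine Measurable.ite ?_ measurable_const (hK.comp measurable_snd)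
    simp_rw [eq_iff_iff]
    exact (((measurable_mem.2 hE).comp measurable_fst).iff
      ((measurable_mem.2 hE).comp (measurable_fst.sub measurable_snd))).setOf
  unfold PK
  congr 1
  calc ∫⁻ x, ∫⁻ y, (if (x ∈ E) = (y ∈ E) then 0 else K (x - y))
      = ∫⁻ x, ∫⁻ z, (if (x ∈ E) = (x - z ∈ E) then 0 else K z) := by
        refine lintegral_congr fun x => ?_
        rw [← lintegral_sub_left_eq_self _ x]
        simp only [sub_sub_cancel]
    _ = ∫⁻ z, ∫⁻ x, (if (x ∈ E) = (x - z ∈ E) then 0 else K z) :=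
        lintegral_lintegral_swap hmeas.aemeasurable
    _ = ∫⁻ z, K z * volume (E ∆ ((· - z) ⁻¹' E)) := by
        refine lintegral_congr fun z => ?_
        simp_rw [hind]
        exact lintegral_indicator_const (hE.symmDiff (measurable_sub_const z hE)) _

theorem stmt0_general (n : ℕ) (K : EuclideanSpace ℝ (Fin n) → ℝ≥0∞)
    (hKmeas : Measurable K)
    (hKint : (∫⁻ x : EuclideanSpace ℝ (Fin n), min 1 (ENNReal.ofReal ‖x‖) * K x) < ⊤)
    (E : Set (EuclideanSpace ℝ (Fin n))) (hE : MeasurableSet E)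
    (hvol : volume E < ⊤)
    (hper : μH[(n : ℝ) - 1] (frontier E) < ⊤) :
    PK K E ≤ max ((1 / 2) * μH[(n : ℝ) - 1] (frontier E)) (volume E) *
        ∫⁻ x : EuclideanSpace ℝ (Fin n), min 1 (ENNReal.ofReal ‖x‖) * K x ∧
      PK K E < ⊤ := by
  set M := max ((1 / 2) * μH[(n : ℝ) - 1] (frontier E)) (volume E)
  have hpointwise : ∀ z, K z * volume (E ∆ ((· - z) ⁻¹' E)) ≤
      2 * M * (min 1 (ENNReal.ofReal ‖z‖) * K z) := by
    intro z
    have hz := volume_symmDiff_preimage_sub_le E z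
    rw [finrank_euclideanSpace_fin] at hz
    calc K z * volume (E ∆ ((· - z) ⁻¹' E)) ≤ K z * (2 * M * min 1 (ENNReal.ofReal ‖z‖)) := by
          gcongr
      _ = 2 * M * (min 1 (ENNReal.ofReal ‖z‖) * K z) := by ring
  have hbound : PK K E ≤ M * ∫⁻ x, min 1 (ENNReal.ofReal ‖x‖) * K x :=
    calc PK K E = 1 / 2 * ∫⁻ z, K z * volume (E ∆ ((· - z) ⁻¹' E)) :=
          PK_eq_half_lintegral_mul_volume_symmDiff hKmeas hE
      _ ≤ 1 / 2 * ∫⁻ z, 2 * M * (min 1 (ENNReal.ofReal ‖z‖) * K z) := by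
          gcongr 1 / 2 * ?_; exact lintegral_mono hpointwise
      _ = M * ∫⁻ x, min 1 (ENNReal.ofReal ‖x‖) * K x := by
          rw [lintegral_const_mul _ (by fun_prop), ← mul_assoc, ← mul_assoc, one_div,
            ENNReal.inv_mul_cancel two_ne_zero ENNReal.ofNat_ne_top, one_mul]
  refine ⟨hbound, hbound.trans_lt (ENNReal.mul_lt_top ?_ hKint)⟩
  exact max_lt (ENNReal.mul_lt_top (by norm_num) hper) hvol

theorem stmt0 (n : ℕ) (K : EuclideanSpace ℝ (Fin n) → ℝ≥0∞)
    (hKmeas : Measurable K)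
    (hKsym : ∀ᵐ x : EuclideanSpace ℝ (Fin n), K (-x) = K x)
    (hKint : (∫⁻ x : EuclideanSpace ℝ (Fin n), min 1 (ENNReal.ofReal ‖x‖) * K x) < ⊤)
    (E : Set (EuclideanSpace ℝ (Fin n))) (hE : MeasurableSet E)
    (hvol : volume E < ⊤)
    (hper : μH[(n : ℝ) - 1] (frontier E) < ⊤) :
    PK K E ≤ max ((1 / 2) * μH[(n : ℝ) - 1] (frontier E)) (volume E) *
        ∫⁻ x : EuclideanSpace ℝ (Fin n), min 1 (ENNReal.ofReal ‖x‖) * K x ∧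
      PK K E < ⊤ :=
  stmt0_general n K hKmeas hKint E hE hvol hper
end

section
/- Let φ : (0,+∞) → (0,+∞) and suppose there is an increasing function ψ : [0,+∞) → [0,+∞) such that for all R ≥ r ≥ 0 and all t > 0, R²φ(Rt) − r²φ(rt) ≥ ψ(R)φ(t) − ψ(r)φ(t). If A, B ⊂ ℝ are bounded intervals with |A| ≤ |B|, then P_φ(A) + c_φ (ψ(|B|) − ψ(|A|)) ≤ P_φ(B), where c_φ = P_φ((0,1)). -/
/-!
Rescaling an interval of length `L` to `(0, 1)` writes its perimeter as the double integral of
`L² φ(L |u - v|)` over `(0, 1) × (0, 1)ᶜ`. For `|A| = r ≤ R = |B|` the hypothesis on `φ` compares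
these integrands pointwise, and the extra term `(ψ R - ψ r) φ(|u - v|)` integrates to
`(ψ R - ψ r) P_φ((0, 1))`.
-/

open MeasureTheory Set
open scoped ENNReal

/-- The one-dimensional non-local perimeter with radial kernel `φ`. -/
noncomputable def Pphi1 (φ : ℝ → ℝ) (A : Set ℝ) : ℝ≥0∞ :=
  ∫⁻ x in A, ∫⁻ y in Aᶜ, ENNReal.ofReal (φ |x - y|)

theorem setLIntegral_eq_ofReal_mul_setLIntegral_comp_affine {L : ℝ} (hL : L ≠ 0) (a : ℝ)
    {S : Set ℝ} (hS : MeasurableSet S) (f : ℝ → ℝ≥0∞) :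
    ∫⁻ y in S, f y =
      ENNReal.ofReal |L| * ∫⁻ x in (fun x => L * x + a) ⁻¹' S, f (L * x + a) := by
  have hsurj : Function.Surjective (fun x : ℝ => L * x + a) := fun y =>
    ⟨(y - a) / L, by field_simp; ring⟩
  have hinj : Function.Injective (fun x : ℝ => L * x + a) := fun x y hxy => by
    simpa [hL] using hxy
  conv_lhs => rw [← image_preimage_eq S hsurj]
  rw [lintegral_image_eq_lintegral_abs_deriv_mul (f' := fun _ => L) (hS.preimage (by fun_prop))
      (fun x _ => by simpa using (((hasDerivAt_id' x).const_mul L).add_const a).hasDerivWithinAt)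
      hinj.injOn, lintegral_const_mul' _ _ ENNReal.ofReal_ne_top]

theorem preimage_affine_Ioo {a b : ℝ} (hab : a < b) :
    (fun x => (b - a) * x + a) ⁻¹' Ioo a b = Ioo 0 1 := by
  ext x
  simp only [mem_preimage, mem_Ioo]
  constructor <;> rintro ⟨h₀, h₁⟩ <;> constructor <;> nlinarith

theorem Pphi1_Ioo_eq_lintegral_rescaled (φ : ℝ → ℝ) {a b : ℝ} (hab : a ≤ b) :
    Pphi1 φ (Ioo a b) = ∫⁻ u in Ioo 0 1, ∫⁻ v in (Ioo 0 1)ᶜ,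
      ENNReal.ofReal ((b - a) ^ 2 * φ ((b - a) * |u - v|)) := by
  rcases hab.eq_or_lt with rfl | hab
  · simp [Pphi1]
  have hL : 0 < b - a := sub_pos.2 hab
  rw [Pphi1, setLIntegral_eq_ofReal_mul_setLIntegral_comp_affine hL.ne' a measurableSet_Ioo,
    preimage_affine_Ioo hab, abs_of_pos hL, ← lintegral_const_mul' _ _ ENNReal.ofReal_ne_top]
  refine setLIntegral_congr_fun measurableSet_Ioo fun u _ => ?_
  rw [setLIntegral_eq_ofReal_mul_setLIntegral_comp_affine hL.ne' a measurableSet_Ioo.compl,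
    preimage_compl, preimage_affine_Ioo hab, abs_of_pos hL,
    ← lintegral_const_mul' _ _ ENNReal.ofReal_ne_top,
    ← lintegral_const_mul' _ _ ENNReal.ofReal_ne_top]
  refine setLIntegral_congr_fun measurableSet_Ioo.compl fun v _ => ?_
  have hdist : |(b - a) * u + a - ((b - a) * v + a)| = (b - a) * |u - v| := by
    rw [show (b - a) * u + a - ((b - a) * v + a) = (b - a) * (u - v) by ring, abs_mul,
      abs_of_pos hL]
  rw [hdist, ENNReal.ofReal_mul (sq_nonneg _), sq, ENNReal.ofReal_mul hL.le, mul_assoc]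

theorem ofReal_add_ofReal_mul_le_of_scaling {φ ψ : ℝ → ℝ} (hφpos : ∀ t : ℝ, 0 < t → 0 < φ t)
    (hψ : MonotoneOn ψ (Ici 0))
    (hineq : ∀ R r t : ℝ, 0 ≤ r → r ≤ R → 0 < t →
      (ψ R - ψ r) * φ t ≤ R ^ 2 * φ (R * t) - r ^ 2 * φ (r * t))
    {r R t : ℝ} (hr : 0 ≤ r) (hrR : r ≤ R) (ht : 0 < t) :
    ENNReal.ofReal (r ^ 2 * φ (r * t)) + ENNReal.ofReal (φ t) * ENNReal.ofReal (ψ R - ψ r) ≤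
      ENNReal.ofReal (R ^ 2 * φ (R * t)) := by
  have hψrR : 0 ≤ ψ R - ψ r := sub_nonneg.2 (hψ hr (hr.trans hrR) hrR)
  have hscaled : 0 ≤ r ^ 2 * φ (r * t) := by
    rcases hr.eq_or_lt with rfl | hr
    · simp
    · exact mul_nonneg (sq_nonneg r) (hφpos _ (mul_pos hr ht)).le
  rw [← ENNReal.ofReal_mul' hψrR,
    ← ENNReal.ofReal_add hscaled (mul_nonneg (hφpos t ht).le hψrR)]
  exact ENNReal.ofReal_le_ofReal (by linarith [hineq R r t hr hrR ht])

theorem stmt7_general (φ : ℝ → ℝ) (hφpos : ∀ t : ℝ, 0 < t → 0 < φ t)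
    (ψ : ℝ → ℝ) (hψ : MonotoneOn ψ (Set.Ici 0))
    (hineq : ∀ R r t : ℝ, 0 ≤ r → r ≤ R → 0 < t →
      (ψ R - ψ r) * φ t ≤ R ^ 2 * φ (R * t) - r ^ 2 * φ (r * t))
    (a b c d : ℝ) (hab : a ≤ b) (hcd : c ≤ d) (hlen : b - a ≤ d - c) :
    Pphi1 φ (Set.Ioo a b) +
        Pphi1 φ (Set.Ioo 0 1) * ENNReal.ofReal (ψ (d - c) - ψ (b - a)) ≤
      Pphi1 φ (Set.Ioo c d) := by
  rw [Pphi1_Ioo_eq_lintegral_rescaled φ hab, Pphi1_Ioo_eq_lintegral_rescaled φ hcd, Pphi1,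
    ← lintegral_mul_const' _ _ ENNReal.ofReal_ne_top]
  refine (le_lintegral_add _ _).trans (setLIntegral_mono' measurableSet_Ioo fun u hu => ?_)
  rw [← lintegral_mul_const' _ _ ENNReal.ofReal_ne_top]
  refine (le_lintegral_add _ _).trans (setLIntegral_mono' measurableSet_Ioo.compl fun v hv => ?_)
  have huv : 0 < |u - v| := abs_pos.2 (sub_ne_zero.2 fun h => hv (h ▸ hu))
  exact ofReal_add_ofReal_mul_le_of_scaling hφpos hψ hineq (sub_nonneg.2 hab) hlen huv

theorem stmt7 (φ : ℝ → ℝ) (hφpos : ∀ t : ℝ, 0 < t → 0 < φ t)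
    (ψ : ℝ → ℝ) (hψ : MonotoneOn ψ (Set.Ici 0)) (hψnn : ∀ t : ℝ, 0 ≤ t → 0 ≤ ψ t)
    (hineq : ∀ R r t : ℝ, 0 ≤ r → r ≤ R → 0 < t →
      (ψ R - ψ r) * φ t ≤ R ^ 2 * φ (R * t) - r ^ 2 * φ (r * t))
    (a b c d : ℝ) (hab : a ≤ b) (hcd : c ≤ d) (hlen : b - a ≤ d - c) :
    Pphi1 φ (Set.Ioo a b) +
        Pphi1 φ (Set.Ioo 0 1) * ENNReal.ofReal (ψ (d - c) - ψ (b - a)) ≤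
      Pphi1 φ (Set.Ioo c d) :=
  stmt7_general φ hφpos ψ hψ hineq a b c d hab hcd hlen
end
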